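/- Seller-side (symmetric) inequality in expectation: for every nondecreasing c : [0,1] → ℝ, every Borel probability measure ν on ℝ with ∫|v| dν(v) < ∞, and every λ ∈ (0,1), one has (1 − λ)·FB ≤ u_B + u_S · ln(1/λ), where FB := ∫_ℝ ∫₀¹ max(v − c(q), 0) dq dν(v), u_B := ∫_ℝ sup_{p ∈ ℝ} ((v − p)·x(p)) dν(v), and u_S := ∫₀¹ sup_{p ∈ ℝ} ((p − c(q))·ν({v : v ≥ p})) dq. -/

import Mathlib

open MeasureTheory Set

/-- The probability that the seller (with cost curve `c` on quantiles in `[0,1]`)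
accepts a price `p`: the Lebesgue measure of `{q ∈ [0,1] : c q ≤ p}`. -/
noncomputable def accProb (c : ℝ → ℝ) (p : ℝ) : ℝ :=
  (volume {q : ℝ | q ∈ Icc (0:ℝ) 1 ∧ c q ≤ p}).toReal

/-- First-best gains from trade, in expectation over the buyer value `v ∼ ν`. -/
noncomputable def FB (c : ℝ → ℝ) (ν : Measure ℝ) : ℝ :=
  ∫ v, (∫ q in (0:ℝ)..1, max (v - c q) 0) ∂ν

/-- The buyer's expected optimal proposer utility. -/
noncomputable def uB (c : ℝ → ℝ) (ν : Measure ℝ) : ℝ :=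
  ∫ v, (⨆ p : ℝ, (v - p) * accProb c p) ∂ν

/-- The seller's expected optimal proposer utility. -/
noncomputable def uS (c : ℝ → ℝ) (ν : Measure ℝ) : ℝ :=
  ∫ q in (0:ℝ)..1, ⨆ p : ℝ, (p - c q) * (ν {v : ℝ | p ≤ v}).toReal

/-!
Represent the buyer's value as `Q τ` with `τ` uniform on `(0,1)`, where `Q = upperQuantile ν` is
the decreasing quantile function of `ν`. Against a seller of cost `z`, trade is efficient exactly
for `τ < κ := P(V ≥ z)`, so the gains from trade are `∫₀^κ (Q τ - z) dτ`. On `[λκ, κ]` the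
seller could post the price `Q τ` and earn `τ (Q τ - z)`, so `Q τ - z ≤ u_S(z) / τ` there and
this part contributes at most `u_S(z) ln(1/λ)`. Rescaling `[0, λκ]` to `[0, κ]` shows that the
rest equals `λ` times the gains plus `λ ∫₀^κ (Q(λσ) - Q σ) dσ`. After integrating over the seller
and exchanging the integrals, the weight of `Q(λσ) - Q σ` is the mass of sellers with
`σ < P(V ≥ c q)`, who all accept the price `Q σ`; hence a buyer of value `Q(λσ)` gets at least
that weight times `Q(λσ) - Q σ`, and integrating over `σ` bounds the last term by `u_B / λ`.
-/

open Filter Topology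

section Quantile

variable {ν : Measure ℝ} [IsProbabilityMeasure ν]

noncomputable def upperTail (ν : Measure ℝ) (p : ℝ) : ℝ := ν.real (Ici p)

omit [IsProbabilityMeasure ν] in
lemma upperTail_nonneg (p : ℝ) : 0 ≤ upperTail ν p := measureReal_nonneg

lemma upperTail_le_one (p : ℝ) : upperTail ν p ≤ 1 := measureReal_le_one

lemma antitone_upperTail : Antitone (upperTail ν) :=
  fun _ _ h ↦ measureReal_mono (Ici_subset_Ici.2 h)

variable (ν) in
lemma tendsto_upperTail_atTop : Tendsto (upperTail ν) atTop (𝓝 0) := by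
  have h := tendsto_measure_iInter_atTop (μ := ν) (fun _ ↦ nullMeasurableSet_Ici)
    (fun _ _ h ↦ Ici_subset_Ici.2 h) ⟨0, measure_ne_top ν _⟩
  have hempty : ⋂ y : ℝ, Ici y = ∅ :=
    eq_empty_of_forall_notMem fun x hx ↦ (lt_add_one x).not_ge (mem_iInter.1 hx (x + 1))
  rw [hempty, measure_empty] at h
  exact (ENNReal.tendsto_toReal ENNReal.zero_ne_top).comp h

variable (ν) in
lemma tendsto_upperTail_atBot : Tendsto (upperTail ν) atBot (𝓝 1) := by
  have h := tendsto_measure_Ici_atBot ν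
  rw [measure_univ] at h
  exact (ENNReal.tendsto_toReal ENNReal.one_ne_top).comp h

lemma le_upperTail_of_forall_lt {τ m : ℝ} (h : ∀ y < m, τ ≤ upperTail ν y) :
    τ ≤ upperTail ν m := by
  have hlim := tendsto_measure_biInter_gt (μ := ν) (s := fun r ↦ Ici (m - r)) (a := 0)
    (fun _ _ ↦ nullMeasurableSet_Ici) (fun _ _ _ hij ↦ Ici_subset_Ici.2 (by linarith))
    ⟨1, one_pos, measure_ne_top ν _⟩
  have hInter : ⋂ r > (0 : ℝ), Ici (m - r) = Ici m := by
    ext x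
    simp only [mem_iInter, mem_Ici]
    exact ⟨fun hx ↦ le_of_forall_pos_le_add fun r hr ↦ by linarith [hx r hr],
      fun hx r hr ↦ by linarith⟩
  rw [hInter] at hlim
  have hlim' := (ENNReal.tendsto_toReal (measure_ne_top ν _)).comp hlim
  exact ge_of_tendsto hlim' (eventually_nhdsWithin_of_forall fun r hr ↦ h _ (by simpa using hr))

/-- Only the values on `(0,1)` are meaningful; elsewhere `sInf` returns a junk value. -/
noncomputable def upperQuantile (ν : Measure ℝ) (τ : ℝ) : ℝ := sInf {y | upperTail ν y < τ}

lemma bddBelow_upperTail_lt {τ : ℝ} (hτ : τ < 1) : BddBelow {y | upperTail ν y < τ} := by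
  obtain ⟨y₀, hy₀⟩ := ((tendsto_upperTail_atBot ν).eventually (lt_mem_nhds hτ)).exists
  exact ⟨y₀, fun y hy ↦ (antitone_upperTail.reflect_lt (hy.trans hy₀)).le⟩

lemma le_upperQuantile {τ y : ℝ} (hτ : 0 < τ) (h : τ < upperTail ν y) :
    y ≤ upperQuantile ν τ :=
  le_csInf ((tendsto_upperTail_atTop ν).eventually (gt_mem_nhds hτ)).exists
    fun _ hb ↦ (antitone_upperTail.reflect_lt (hb.trans h)).le

lemma upperQuantile_le {τ y : ℝ} (hτ : τ < 1) (h : upperTail ν y < τ) :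
    upperQuantile ν τ ≤ y :=
  csInf_le (bddBelow_upperTail_lt hτ) h

lemma le_upperTail_upperQuantile {τ : ℝ} (hτ : τ ∈ Ioo 0 1) :
    τ ≤ upperTail ν (upperQuantile ν τ) :=
  le_upperTail_of_forall_lt fun _ hy ↦ not_lt.1 fun h ↦ (upperQuantile_le (ν := ν) hτ.2 h).not_gt hy

lemma antitoneOn_upperQuantile : AntitoneOn (upperQuantile ν) (Ioo 0 1) :=
  fun _ ha _ hb hab ↦ csInf_le_csInf (bddBelow_upperTail_lt hb.2)
    ((tendsto_upperTail_atTop ν).eventually (gt_mem_nhds ha.1)).exists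
    fun _ hy ↦ lt_of_lt_of_le hy hab

lemma upperQuantile_le_upperQuantile_mul {l σ : ℝ} (hl : l ∈ Ioc 0 1) (hσ : σ ∈ Ioo 0 1) :
    upperQuantile ν σ ≤ upperQuantile ν (l * σ) :=
  antitoneOn_upperQuantile ⟨mul_pos hl.1 hσ.1, (mul_le_of_le_one_left hσ.1.le hl.2).trans_lt hσ.2⟩
    hσ (mul_le_of_le_one_left hσ.1.le hl.2)

lemma aemeasurable_upperQuantile : AEMeasurable (upperQuantile ν) (volume.restrict (Ioc 0 1)) := by
  rw [← Measure.restrict_congr_set Ioo_ae_eq_Ioc]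
  exact aemeasurable_restrict_of_antitoneOn measurableSet_Ioo antitoneOn_upperQuantile

lemma volume_Ioo_inter_upperQuantile_preimage_Ici (y : ℝ) :
    volume (Ioo 0 1 ∩ upperQuantile ν ⁻¹' Ici y) = ν (Ici y) := by
  set t := upperTail ν y
  have hlow : Ioo 0 t ⊆ Ioo 0 1 ∩ upperQuantile ν ⁻¹' Ici y := fun τ hτ ↦
    ⟨⟨hτ.1, hτ.2.trans_le (upperTail_le_one y)⟩, le_upperQuantile hτ.1 hτ.2⟩
  have hup : Ioo 0 1 ∩ upperQuantile ν ⁻¹' Ici y ⊆ Ioc 0 t := by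
    rintro τ ⟨hτ, hy⟩
    refine ⟨hτ.1, not_lt.1 fun ht ↦ ?_⟩
    have hQ : upperQuantile ν τ = y := (upperQuantile_le hτ.2 ht).antisymm hy
    have hτt := le_upperTail_upperQuantile (ν := ν) hτ
    rw [hQ] at hτt
    exact hτt.not_gt ht
  have ht : ENNReal.ofReal t = ν (Ici y) := ofReal_measureReal (measure_ne_top _ _)
  refine le_antisymm ?_ ?_
  · calc _ ≤ volume (Ioc 0 t) := measure_mono hup
      _ = ν (Ici y) := by rw [Real.volume_Ioc, sub_zero, ht]
  · calc ν (Ici y) = volume (Ioo 0 t) := by rw [Real.volume_Ioo, sub_zero, ht]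
      _ ≤ _ := measure_mono hlow

theorem map_upperQuantile : (volume.restrict (Ioc 0 1)).map (upperQuantile ν) = ν := by
  refine Measure.ext_of_Ici _ _ fun y ↦ ?_
  rw [Measure.map_apply_of_aemeasurable aemeasurable_upperQuantile measurableSet_Ici,
    ← Measure.restrict_congr_set Ioo_ae_eq_Ioc, Measure.restrict_apply' measurableSet_Ioo,
    inter_comm, volume_Ioo_inter_upperQuantile_preimage_Ici]

lemma integral_comp_upperQuantile {g : ℝ → ℝ} (hg : AEStronglyMeasurable g ν) :
    ∫ τ in 0..1, g (upperQuantile ν τ) = ∫ v, g v ∂ν := by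
  rw [intervalIntegral.integral_of_le zero_le_one,
    ← integral_map (aemeasurable_upperQuantile (ν := ν)) (by rwa [map_upperQuantile]),
    map_upperQuantile]

lemma intervalIntegrable_comp_upperQuantile {g : ℝ → ℝ} (hg : Integrable g ν) {a b : ℝ}
    (ha : a ∈ Icc 0 1) (hb : b ∈ Icc 0 1) :
    IntervalIntegrable (fun τ ↦ g (upperQuantile ν τ)) volume a b := by
  have hint : IntegrableOn (fun τ ↦ g (upperQuantile ν τ)) (Icc 0 1) := by
    rw [integrableOn_Icc_iff_integrableOn_Ioc]
    rw [← map_upperQuantile (ν := ν)] at hg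
    exact hg.comp_aemeasurable aemeasurable_upperQuantile
  exact (hint.mono_set (uIcc_subset_Icc ha hb)).intervalIntegrable

lemma intervalIntegrable_comp_upperQuantile_mul {g : ℝ → ℝ} (hg : Integrable g ν) {l b : ℝ}
    (hl : l ∈ Ioc 0 1) (hb : b ∈ Icc 0 1) :
    IntervalIntegrable (fun σ ↦ g (upperQuantile ν (l * σ))) volume 0 b := by
  have hlb : l * b ∈ Icc 0 1 :=
    ⟨mul_nonneg hl.1.le hb.1, mul_le_one₀ hl.2 hb.1 hb.2⟩
  simpa [hl.1.ne'] using
    (intervalIntegrable_comp_upperQuantile hg ⟨le_rfl, zero_le_one⟩ hlb).comp_mul_left (c := l)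

end Quantile

section Seller

variable {ν : Measure ℝ} [IsProbabilityMeasure ν] (hν : Integrable (fun v : ℝ ↦ v) ν)
include hν

lemma integrable_posPart_sub (z : ℝ) : Integrable (fun v ↦ max (v - z) 0) ν :=
  (hν.sub (integrable_const z)).pos_part

lemma antitone_integral_posPart_sub : Antitone fun z ↦ ∫ v, max (v - z) 0 ∂ν :=
  fun _ _ h ↦ integral_mono (integrable_posPart_sub hν _) (integrable_posPart_sub hν _)
    fun _ ↦ max_le_max (by linarith) le_rfl

lemma sub_mul_upperTail_le_integral (z p : ℝ) :
    (p - z) * upperTail ν p ≤ ∫ v, max (v - z) 0 ∂ν := by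
  rcases le_or_gt p z with hpz | hzp
  · exact (mul_nonpos_of_nonpos_of_nonneg (by linarith) (upperTail_nonneg p)).trans
      (integral_nonneg fun _ ↦ le_max_right _ _)
  · calc (p - z) * upperTail ν p ≤ (p - z) * ν.real {v | p - z ≤ max (v - z) 0} := by
          gcongr
          exact measureReal_mono fun v (hv : p ≤ v) ↦ le_max_of_le_left (sub_le_sub_right hv z)
      _ ≤ _ := mul_meas_ge_le_integral_of_nonneg (ae_of_all _ fun _ ↦ le_max_right _ _)
          (integrable_posPart_sub hν z) _

noncomputable def sellerRevenue (ν : Measure ℝ) (z : ℝ) : ℝ := ⨆ p : ℝ, (p - z) * upperTail ν p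

lemma bddAbove_sellerRevenue (z : ℝ) : BddAbove (range fun p ↦ (p - z) * upperTail ν p) :=
  ⟨_, forall_mem_range.2 (sub_mul_upperTail_le_integral hν z)⟩

lemma le_sellerRevenue (z p : ℝ) : (p - z) * upperTail ν p ≤ sellerRevenue ν z :=
  le_ciSup (bddAbove_sellerRevenue hν z) p

lemma sellerRevenue_nonneg (z : ℝ) : 0 ≤ sellerRevenue ν z := by
  simpa using le_sellerRevenue hν z z

lemma antitone_sellerRevenue : Antitone (sellerRevenue ν) := fun _ _ h ↦
  ciSup_mono (bddAbove_sellerRevenue hν _) fun p ↦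
    mul_le_mul_of_nonneg_right (by linarith) (upperTail_nonneg p)

lemma mul_upperQuantile_sub_le_sellerRevenue (z : ℝ) {τ : ℝ} (hτ : τ ∈ Ioo 0 1) :
    τ * (upperQuantile ν τ - z) ≤ sellerRevenue ν z := by
  rcases le_or_gt (upperQuantile ν τ) z with h | h
  · exact (mul_nonpos_of_nonneg_of_nonpos hτ.1.le (by linarith)).trans
      (sellerRevenue_nonneg hν z)
  · calc τ * (upperQuantile ν τ - z)
        ≤ upperTail ν (upperQuantile ν τ) * (upperQuantile ν τ - z) := by
          gcongr; exact le_upperTail_upperQuantile hτ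
      _ ≤ sellerRevenue ν z := by rw [mul_comm]; exact le_sellerRevenue hν z _

lemma integral_posPart_sub_eq (z : ℝ) :
    ∫ v, max (v - z) 0 ∂ν = ∫ τ in 0..upperTail ν z, (upperQuantile ν τ - z) := by
  set κ := upperTail ν z
  have hκ : κ ∈ Icc 0 1 := ⟨upperTail_nonneg z, upperTail_le_one z⟩
  have hg := integrable_posPart_sub hν z
  rw [← integral_comp_upperQuantile hg.aestronglyMeasurable,
    ← intervalIntegral.integral_add_adjacent_intervals (b := κ)
      (intervalIntegrable_comp_upperQuantile hg ⟨le_rfl, zero_le_one⟩ hκ)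
      (intervalIntegrable_comp_upperQuantile hg hκ ⟨zero_le_one, le_rfl⟩),
    intervalIntegral.integral_congr_Ioo_of_le hκ.2 (g := fun _ ↦ 0)
      fun τ hτ ↦ max_eq_right (by linarith [upperQuantile_le (ν := ν) hτ.2 hτ.1]),
    intervalIntegral.integral_zero, add_zero]
  exact intervalIntegral.integral_congr_Ioo_of_le hκ.1
    fun τ hτ ↦ max_eq_left (by linarith [le_upperQuantile (ν := ν) hτ.1 hτ.2])

lemma integral_upperQuantile_sub_le (z : ℝ) {a b : ℝ} (ha : 0 < a) (hab : a ≤ b) (hb : b ≤ 1) :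
    ∫ τ in a..b, (upperQuantile ν τ - z) ≤ sellerRevenue ν z * Real.log (b / a) := by
  calc ∫ τ in a..b, (upperQuantile ν τ - z) ≤ ∫ τ in a..b, sellerRevenue ν z * τ⁻¹ := by
        refine intervalIntegral.integral_mono_on_of_le_Ioo hab
          (intervalIntegrable_comp_upperQuantile (hν.sub (integrable_const z))
            ⟨ha.le, hab.trans hb⟩ ⟨ha.le.trans hab, hb⟩)
          ((intervalIntegral.intervalIntegrable_inv (fun τ hτ ↦ ?_) continuousOn_id).const_mul _)
          fun τ hτ ↦ (le_mul_inv_iff₀' (ha.trans hτ.1)).2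
            (mul_upperQuantile_sub_le_sellerRevenue hν z ⟨ha.trans hτ.1, hτ.2.trans_le hb⟩)
        rw [uIcc_of_le hab] at hτ
        exact (ha.trans_le hτ.1).ne'
    _ = sellerRevenue ν z * Real.log (b / a) := by
        rw [intervalIntegral.integral_const_mul, integral_inv_of_pos ha (ha.trans_le hab)]

theorem one_sub_mul_integral_posPart_sub_le {l : ℝ} (hl : l ∈ Ioo 0 1) (z : ℝ) :
    (1 - l) * ∫ v, max (v - z) 0 ∂ν ≤
      l * (∫ σ in 0..upperTail ν z, (upperQuantile ν (l * σ) - upperQuantile ν σ)) +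
        Real.log (1 / l) * sellerRevenue ν z := by
  have hlog : 0 ≤ Real.log (1 / l) := Real.log_nonneg (by rw [le_div_iff₀ hl.1]; linarith [hl.2])
  rw [integral_posPart_sub_eq hν z]
  have hκ0 := upperTail_nonneg (ν := ν) z
  have hκ1 := upperTail_le_one (ν := ν) z
  generalize upperTail ν z = κ at hκ0 hκ1 ⊢
  rcases hκ0.eq_or_lt with rfl | hκ
  · simpa using mul_nonneg hlog (sellerRevenue_nonneg hν z)
  have hlκ : l * κ ≤ κ := mul_le_of_le_one_left hκ.le hl.2.le
  have hlκ₀ : 0 < l * κ := mul_pos hl.1 hκ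
  have hQ : Integrable (fun v ↦ v - z) ν := hν.sub (integrable_const z)
  have iQ : ∀ a b : ℝ, 0 ≤ a → a ≤ b → b ≤ 1 →
      IntervalIntegrable (fun τ ↦ upperQuantile ν τ - z) volume a b :=
    fun a b ha hab hb ↦
      intervalIntegrable_comp_upperQuantile hQ ⟨ha, hab.trans hb⟩ ⟨ha.trans hab, hb⟩
  have iQl : IntervalIntegrable (fun σ ↦ upperQuantile ν (l * σ) - z) volume 0 κ :=
    intervalIntegrable_comp_upperQuantile_mul hQ ⟨hl.1, hl.2.le⟩ ⟨hκ.le, hκ1⟩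
  have hsplit : ∫ τ in 0..κ, (upperQuantile ν τ - z) =
      (∫ τ in 0..l * κ, (upperQuantile ν τ - z)) + ∫ τ in l * κ..κ, (upperQuantile ν τ - z) :=
    (intervalIntegral.integral_add_adjacent_intervals (iQ _ _ le_rfl hlκ₀.le (hlκ.trans hκ1))
      (iQ _ _ hlκ₀.le hlκ hκ1)).symm
  have hscale : ∫ τ in 0..l * κ, (upperQuantile ν τ - z) =
      l * ∫ σ in 0..κ, (upperQuantile ν (l * σ) - z) := by
    simpa using (intervalIntegral.mul_integral_comp_mul_left (a := 0) (b := κ)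
      (f := fun τ ↦ upperQuantile ν τ - z) l).symm
  have hshift : ∫ σ in 0..κ, (upperQuantile ν (l * σ) - upperQuantile ν σ) =
      (∫ σ in 0..κ, (upperQuantile ν (l * σ) - z)) - ∫ σ in 0..κ, (upperQuantile ν σ - z) := by
    rw [← intervalIntegral.integral_sub iQl (iQ _ _ le_rfl hκ.le hκ1)]
    congr 1 with σ
    ring
  have hseller := integral_upperQuantile_sub_le hν z hlκ₀ hlκ hκ1
  rw [show κ / (l * κ) = 1 / l by field_simp] at hseller
  linear_combination hseller + hsplit + hscale - l * hshift

end Seller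

section Buyer

lemma accProb_nonneg (c : ℝ → ℝ) (p : ℝ) : 0 ≤ accProb c p := ENNReal.toReal_nonneg

lemma accProb_le_one (c : ℝ → ℝ) (p : ℝ) : accProb c p ≤ 1 :=
  calc accProb c p ≤ volume.real (Icc (0:ℝ) 1) :=
        measureReal_mono (fun _ hq ↦ hq.1) measure_Icc_lt_top.ne
    _ = 1 := by simp

variable {c : ℝ → ℝ}

lemma accProb_eq_zero (hc : Monotone c) {p : ℝ} (hp : p < c 0) : accProb c p = 0 := by
  have : {q : ℝ | q ∈ Icc (0:ℝ) 1 ∧ c q ≤ p} = ∅ :=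
    eq_empty_of_forall_notMem fun q hq ↦ (hp.trans_le (hc hq.1.1)).not_ge hq.2
  rw [accProb, this, measure_empty, ENNReal.toReal_zero]

lemma sub_mul_accProb_le (hc : Monotone c) (v p : ℝ) :
    (v - p) * accProb c p ≤ max (v - c 0) 0 := by
  rcases lt_or_ge p (c 0) with hp | hp
  · rw [accProb_eq_zero hc hp, mul_zero]
    exact le_max_right _ _
  · have h₀ := accProb_nonneg c p
    have h₁ := accProb_le_one c p
    nlinarith [le_max_left (v - c 0) 0, le_max_right (v - c 0) 0]

noncomputable def buyerUtility (c : ℝ → ℝ) (v : ℝ) : ℝ := ⨆ p : ℝ, (v - p) * accProb c p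

lemma bddAbove_buyerUtility (hc : Monotone c) (v : ℝ) :
    BddAbove (range fun p ↦ (v - p) * accProb c p) :=
  ⟨_, forall_mem_range.2 (sub_mul_accProb_le hc v)⟩

lemma le_buyerUtility (hc : Monotone c) (v p : ℝ) : (v - p) * accProb c p ≤ buyerUtility c v :=
  le_ciSup (bddAbove_buyerUtility hc v) p

lemma buyerUtility_nonneg (hc : Monotone c) (v : ℝ) : 0 ≤ buyerUtility c v := by
  simpa using le_buyerUtility hc v v

lemma monotone_buyerUtility (hc : Monotone c) : Monotone (buyerUtility c) := fun _ _ h ↦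
  ciSup_mono (bddAbove_buyerUtility hc _) fun p ↦
    mul_le_mul_of_nonneg_right (by linarith) (accProb_nonneg c p)

lemma integrable_buyerUtility (hc : Monotone c) {ν : Measure ℝ} [IsProbabilityMeasure ν]
    (hν : Integrable (fun v : ℝ ↦ v) ν) : Integrable (buyerUtility c) ν :=
  (integrable_posPart_sub hν (c 0)).mono' (monotone_buyerUtility hc).measurable.aestronglyMeasurable
    (ae_of_all _ fun v ↦ by
      rw [Real.norm_of_nonneg (buyerUtility_nonneg hc v)]
      exact ciSup_le (sub_mul_accProb_le hc v))

end Buyer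

section Integration

lemma ae_restrict_Ioc_mem_Ioo (a b : ℝ) : ∀ᵐ x ∂(volume.restrict (Ioc a b)), x ∈ Ioo a b := by
  rw [← Measure.restrict_congr_set Ioo_ae_eq_Ioc]
  exact ae_restrict_mem measurableSet_Ioo

theorem integral_integral_indicator_Iio_swap {α : Type*} [MeasurableSpace α] {μ : Measure α}
    [IsFiniteMeasure μ] {ρ : Measure ℝ} [SFinite ρ] {g : α → ℝ} (hg : Measurable g)
    {f : ℝ → ℝ} (hf : Integrable f ρ) :
    ∫ q, ∫ σ, (Iio (g q)).indicator f σ ∂ρ ∂μ = ∫ σ, μ.real {q | σ < g q} * f σ ∂ρ := by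
  have hint : Integrable (Function.uncurry fun q σ ↦ (Iio (g q)).indicator f σ) (μ.prod ρ) :=
    (hf.comp_snd μ).indicator (measurableSet_lt measurable_snd (hg.comp measurable_fst))
  rw [integral_integral_swap hint]
  congr 1 with σ
  exact (integral_indicator_const (f σ) (measurableSet_lt measurable_const hg)).trans
    (smul_eq_mul _ _)

lemma intervalIntegral_eq_integral_indicator_Iio {f : ℝ → ℝ} {κ : ℝ} (hκ : κ ∈ Icc (0:ℝ) 1) :
    ∫ σ in 0..κ, f σ = ∫ σ in Ioc 0 1, (Iio κ).indicator f σ := by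
  rw [integral_indicator measurableSet_Iio, Measure.restrict_restrict measurableSet_Iio,
    intervalIntegral.integral_of_le hκ.1, integral_Ioc_eq_integral_Ioo]
  congr 2
  ext σ
  exact ⟨fun h ↦ ⟨h.2, h.1, h.2.le.trans hκ.2⟩, fun h ↦ ⟨h.2.1, h.1⟩⟩

end Integration

section QuantileGap

variable {ν : Measure ℝ} [IsProbabilityMeasure ν] {c : ℝ → ℝ}

lemma measureReal_lt_upperTail_le_accProb {σ : ℝ} (hσ : 0 < σ) :
    (volume.restrict (Ioc (0:ℝ) 1)).real {q | σ < upperTail ν (c q)} ≤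
      accProb c (upperQuantile ν σ) := by
  rw [measureReal_restrict_apply' measurableSet_Ioc]
  exact measureReal_mono (fun q hq ↦ ⟨Ioc_subset_Icc_self hq.2, le_upperQuantile hσ hq.1⟩)
    ((measure_mono fun q hq ↦ hq.1).trans_lt measure_Icc_lt_top).ne

theorem mul_integral_integral_upperQuantile_mul_sub_le_uB (hc : Monotone c)
    (hν : Integrable (fun v : ℝ ↦ v) ν) {l : ℝ} (hl : l ∈ Ioo 0 1) :
    l * ∫ q in 0..1, ∫ σ in 0..upperTail ν (c q),
        (upperQuantile ν (l * σ) - upperQuantile ν σ) ≤ uB c ν := by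
  have hl' : l ∈ Ioc 0 1 := ⟨hl.1, hl.2.le⟩
  have h₀ : (0:ℝ) ∈ Icc 0 1 := ⟨le_rfl, zero_le_one⟩
  have h₁ : (1:ℝ) ∈ Icc 0 1 := ⟨zero_le_one, le_rfl⟩
  have hF : IntervalIntegrable (fun σ ↦ upperQuantile ν (l * σ) - upperQuantile ν σ) volume 0 1 :=
    (intervalIntegrable_comp_upperQuantile_mul hν hl' h₁).sub
      (intervalIntegrable_comp_upperQuantile hν h₀ h₁)
  have hB := integrable_buyerUtility hc hν
  simp_rw [fun q ↦ intervalIntegral_eq_integral_indicator_Iio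
    (f := fun σ ↦ upperQuantile ν (l * σ) - upperQuantile ν σ)
    ⟨upperTail_nonneg (ν := ν) (c q), upperTail_le_one (ν := ν) (c q)⟩]
  rw [intervalIntegral.integral_of_le zero_le_one, integral_integral_indicator_Iio_swap
    (g := fun q ↦ upperTail ν (c q)) (antitone_upperTail.comp_monotone hc).measurable hF.1]
  calc l * ∫ σ in Ioc 0 1, (volume.restrict (Ioc (0:ℝ) 1)).real {q | σ < upperTail ν (c q)} *
          (upperQuantile ν (l * σ) - upperQuantile ν σ)
      ≤ l * ∫ σ in Ioc 0 1, buyerUtility c (upperQuantile ν (l * σ)) := by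
        refine mul_le_mul_of_nonneg_left (integral_mono_of_nonneg ?_
          (intervalIntegrable_comp_upperQuantile_mul hB hl' h₁).1 ?_) hl.1.le
        · filter_upwards [ae_restrict_Ioc_mem_Ioo 0 1] with σ hσ
          exact mul_nonneg measureReal_nonneg
            (sub_nonneg.2 (upperQuantile_le_upperQuantile_mul hl' hσ))
        · filter_upwards [ae_restrict_Ioc_mem_Ioo 0 1] with σ hσ
          calc _ ≤ accProb c (upperQuantile ν σ) * (upperQuantile ν (l * σ) - upperQuantile ν σ) :=
                mul_le_mul_of_nonneg_right (measureReal_lt_upperTail_le_accProb hσ.1)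
                  (sub_nonneg.2 (upperQuantile_le_upperQuantile_mul hl' hσ))
            _ ≤ _ := by rw [mul_comm]; exact le_buyerUtility hc _ _
    _ = ∫ τ in 0..l, buyerUtility c (upperQuantile ν τ) := by
        rw [← intervalIntegral.integral_of_le zero_le_one]
        simpa using intervalIntegral.mul_integral_comp_mul_left (a := 0) (b := 1)
          (f := fun τ ↦ buyerUtility c (upperQuantile ν τ)) l
    _ ≤ ∫ τ in 0..1, buyerUtility c (upperQuantile ν τ) :=
        intervalIntegral.integral_mono_interval le_rfl hl.1.le hl.2.le
          (ae_of_all _ fun _ ↦ buyerUtility_nonneg hc _)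
          (intervalIntegrable_comp_upperQuantile hB h₀ h₁)
    _ = uB c ν := integral_comp_upperQuantile hB.aestronglyMeasurable

lemma antitone_integral_upperQuantile_mul_sub (hν : Integrable (fun v : ℝ ↦ v) ν) {l : ℝ}
    (hl : l ∈ Ioc 0 1) :
    Antitone fun z ↦ ∫ σ in 0..upperTail ν z, (upperQuantile ν (l * σ) - upperQuantile ν σ) := by
  intro z₁ z₂ h
  have hκ : upperTail ν z₁ ∈ Icc 0 1 := ⟨upperTail_nonneg z₁, upperTail_le_one z₁⟩
  refine intervalIntegral.integral_mono_interval le_rfl (upperTail_nonneg z₂)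
    (antitone_upperTail h) ?_ ((intervalIntegrable_comp_upperQuantile_mul hν hl hκ).sub
      (intervalIntegrable_comp_upperQuantile hν ⟨le_rfl, zero_le_one⟩ hκ))
  filter_upwards [ae_restrict_Ioc_mem_Ioo 0 (upperTail ν z₁)] with σ hσ
  exact sub_nonneg.2 (upperQuantile_le_upperQuantile_mul hl ⟨hσ.1, hσ.2.trans_le hκ.2⟩)

end QuantileGap

section MonotoneCost

variable {ν : Measure ℝ} [IsProbabilityMeasure ν] {c : ℝ → ℝ}

lemma FB_eq_integral_integral_posPart_sub (hc : Monotone c)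
    (hν : Integrable (fun v : ℝ ↦ v) ν) :
    FB c ν = ∫ q in 0..1, ∫ v, max (v - c q) 0 ∂ν := by
  have hmeas : AEStronglyMeasurable (Function.uncurry fun v q ↦ max (v - c q) 0)
      (ν.prod (volume.restrict (Ioc 0 1))) :=
    ((measurable_fst.sub (hc.measurable.comp measurable_snd)).max
      measurable_const).aestronglyMeasurable
  have hint : Integrable (Function.uncurry fun v q ↦ max (v - c q) 0)
      (ν.prod (volume.restrict (Ioc 0 1))) := by
    refine (integrable_prod_iff' hmeas).2 ⟨ae_of_all _ fun q ↦ integrable_posPart_sub hν (c q), ?_⟩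
    simp only [Function.uncurry_apply_pair, Real.norm_of_nonneg (le_max_right _ 0)]
    exact ((antitone_integral_posPart_sub hν).comp_monotone hc).intervalIntegrable.1
  unfold FB
  simp_rw [intervalIntegral.integral_of_le zero_le_one]
  exact integral_integral_swap hint

theorem one_sub_mul_FB_le_of_monotone (hc : Monotone c) (hν : Integrable (fun v : ℝ ↦ v) ν)
    {l : ℝ} (hl : l ∈ Ioo 0 1) :
    (1 - l) * FB c ν ≤ uB c ν + uS c ν * Real.log (1 / l) := by
  have hH : IntervalIntegrable (fun q ↦ ∫ v, max (v - c q) 0 ∂ν) volume 0 1 :=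
    ((antitone_integral_posPart_sub hν).comp_monotone hc).intervalIntegrable
  have hD : IntervalIntegrable (fun q ↦ ∫ σ in 0..upperTail ν (c q),
      (upperQuantile ν (l * σ) - upperQuantile ν σ)) volume 0 1 :=
    ((antitone_integral_upperQuantile_mul_sub hν ⟨hl.1, hl.2.le⟩).comp_monotone
      hc).intervalIntegrable
  have hS : IntervalIntegrable (fun q ↦ sellerRevenue ν (c q)) volume 0 1 :=
    ((antitone_sellerRevenue hν).comp_monotone hc).intervalIntegrable
  calc (1 - l) * FB c ν = ∫ q in 0..1, (1 - l) * ∫ v, max (v - c q) 0 ∂ν := by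
        rw [FB_eq_integral_integral_posPart_sub hc hν, intervalIntegral.integral_const_mul]
    _ ≤ ∫ q in 0..1, (l * (∫ σ in 0..upperTail ν (c q),
          (upperQuantile ν (l * σ) - upperQuantile ν σ)) +
            Real.log (1 / l) * sellerRevenue ν (c q)) :=
        intervalIntegral.integral_mono_on zero_le_one (hH.const_mul _)
          ((hD.const_mul l).add (hS.const_mul _))
          fun q _ ↦ one_sub_mul_integral_posPart_sub_le hν hl (c q)
    _ = l * (∫ q in 0..1, ∫ σ in 0..upperTail ν (c q),
          (upperQuantile ν (l * σ) - upperQuantile ν σ)) + Real.log (1 / l) * uS c ν := by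
        rw [intervalIntegral.integral_add (hD.const_mul l) (hS.const_mul _),
          intervalIntegral.integral_const_mul, intervalIntegral.integral_const_mul]
        rfl
    _ ≤ uB c ν + uS c ν * Real.log (1 / l) := by
        rw [mul_comm (Real.log _)]
        gcongr
        exact mul_integral_integral_upperQuantile_mul_sub_le_uB hc hν hl

end MonotoneCost

section Congr

variable {c c' : ℝ → ℝ} (h : EqOn c c' (Icc 0 1))
include h

lemma accProb_congr (p : ℝ) : accProb c p = accProb c' p := by
  unfold accProb
  congr 2 with q
  exact and_congr_right fun hq ↦ by rw [h hq]

lemma FB_congr (ν : Measure ℝ) : FB c ν = FB c' ν := by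
  have h' : EqOn c c' (uIcc 0 1) := by rwa [uIcc_of_le zero_le_one]
  unfold FB
  congr 1 with v
  exact intervalIntegral.integral_congr fun q hq ↦ by simp only [h' hq]

lemma uB_congr (ν : Measure ℝ) : uB c ν = uB c' ν := by
  simp only [uB, accProb_congr h]

lemma uS_congr (ν : Measure ℝ) : uS c ν = uS c' ν := by
  have h' : EqOn c c' (uIcc 0 1) := by rwa [uIcc_of_le zero_le_one]
  exact intervalIntegral.integral_congr fun q hq ↦ by simp only [h' hq]

end Congr

theorem stmt7 (c : ℝ → ℝ) (hc : MonotoneOn c (Icc (0:ℝ) 1))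
    (ν : Measure ℝ) [IsProbabilityMeasure ν]
    (hν : Integrable (fun v : ℝ => v) ν)
    (l : ℝ) (hl : l ∈ Ioo (0:ℝ) 1) :
    (1 - l) * FB c ν ≤ uB c ν + uS c ν * Real.log (1 / l) := by
  obtain ⟨c', hc', hcc'⟩ := hc.exists_monotone_extension
    (hc.map_isLeast (isLeast_Icc zero_le_one)).bddBelow
    (hc.map_isGreatest (isGreatest_Icc zero_le_one)).bddAbove
  rw [FB_congr hcc', uB_congr hcc', uS_congr hcc']
  exact one_sub_mul_FB_le_of_monotone hc' hν hl
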